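/- Let φ < 1 and α ≥ 0. Then there exist constants 0 < c₁ ≤ c₂ such that for every V ≥ 1, c₁ ≤ ∫₀^V u^{α/(α+1)} 𝒦(u) du ≤ c₂. -/

import Mathlib

open MeasureTheory Real

/-- `C_φ = (2−φ)/(1−φ)`, the right endpoint of the support of the power-law density. -/
noncomputable def Cphi (φ : ℝ) : ℝ := (2 - φ) / (1 - φ)

/-- The power-law density `p(λ) = (1−φ) C_φ^{φ−1} λ^{−φ}` on `(0, C_φ)`. -/
noncomputable def pden (φ l : ℝ) : ℝ := (1 - φ) * Cphi φ ^ (φ - 1) * l ^ (-φ)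

/-- `𝒦(x) = ∫₀^{C_φ} λ² e^{−2λx} p(λ) dλ`. -/
noncomputable def calK (φ x : ℝ) : ℝ :=
  ∫ l in Set.Ioo (0:ℝ) (Cphi φ), l ^ 2 * Real.exp (-2 * l * x) * pden φ l

lemma Cphi_pos {φ : ℝ} (hφ : φ < 1) : 0 < Cphi φ :=
  div_pos (by linarith) (by linarith)

lemma pden_pos {φ : ℝ} (hφ : φ < 1) {l : ℝ} (hl : 0 < l) : 0 < pden φ l :=
  mul_pos (mul_pos (by linarith) (rpow_pos_of_pos (Cphi_pos hφ) _)) (rpow_pos_of_pos hl _)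

lemma integrableOn_rpow_Ioo {r b : ℝ} (hr : -1 < r) (hb : 0 ≤ b) :
    IntegrableOn (fun l : ℝ => l ^ r) (Set.Ioo 0 b) := by
  have h := intervalIntegral.intervalIntegrable_rpow' (a := 0) (b := b) hr
  exact ((intervalIntegrable_iff_integrableOn_Ioc_of_le hb).mp h).mono_set
    Set.Ioo_subset_Ioc_self

/-- The integrand of `calK` is integrable on `(0, C_φ)`, for every `x`. -/
lemma integrableOn_calK_integrand {φ : ℝ} (hφ : φ < 1) (x : ℝ) :
    IntegrableOn (fun l => l ^ 2 * Real.exp (-2 * l * x) * pden φ l)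
      (Set.Ioo (0:ℝ) (Cphi φ)) := by
  have hC := Cphi_pos hφ
  set c : ℝ := (1 - φ) * Cphi φ ^ (φ - 1) with hc
  have hcpos : 0 < c := mul_pos (by linarith) (rpow_pos_of_pos hC _)
  apply Integrable.mono'
    (g := fun l => (c * Real.exp (2 * Cphi φ * |x|)) * l ^ (2 - φ))
  · exact (integrableOn_rpow_Ioo (by linarith) hC.le).const_mul _
  · apply ContinuousOn.aestronglyMeasurable _ measurableSet_Ioo
    apply ContinuousOn.mul
    · exact (continuousOn_pow 2).mul (Real.continuous_exp.comp (by fun_prop)).continuousOn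
    · unfold pden
      exact continuousOn_const.mul
        (continuousOn_id.rpow_const (fun y hy => Or.inl (ne_of_gt hy.1)))
  · rw [ae_restrict_iff' measurableSet_Ioo]
    filter_upwards with l hl
    have hl0 : 0 < l := hl.1
    have hlC : l < Cphi φ := hl.2
    have hpos : 0 < l ^ 2 * Real.exp (-2 * l * x) * pden φ l :=
      mul_pos (mul_pos (pow_pos hl0 2) (Real.exp_pos _)) (pden_pos hφ hl0)
    rw [Real.norm_eq_abs, abs_of_pos hpos]
    have hexp : Real.exp (-2 * l * x) ≤ Real.exp (2 * Cphi φ * |x|) := by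
      apply Real.exp_le_exp.2
      calc -2 * l * x ≤ |(-2) * l * x| := le_abs_self _
        _ = 2 * l * |x| := by rw [abs_mul, abs_mul]; simp [abs_of_pos hl0]
        _ ≤ 2 * Cphi φ * |x| := by
            have := abs_nonneg x; nlinarith
    have hrw : l ^ 2 * pden φ l = c * l ^ (2 - φ) := by
      unfold pden
      rw [← hc, show (2 : ℝ) - φ = (2:ℕ) + (-φ) by push_cast; ring,
        Real.rpow_add hl0, Real.rpow_natCast]
      ring
    calc l ^ 2 * Real.exp (-2 * l * x) * pden φ l
        = Real.exp (-2 * l * x) * (l ^ 2 * pden φ l) := by ring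
      _ ≤ Real.exp (2 * Cphi φ * |x|) * (l ^ 2 * pden φ l) := by
          apply mul_le_mul_of_nonneg_right hexp
          exact le_of_lt (mul_pos (pow_pos hl0 2) (pden_pos hφ hl0))
      _ = c * Real.exp (2 * Cphi φ * |x|) * l ^ (2 - φ) := by rw [hrw]; ring

lemma integrableOn_pden {φ : ℝ} (hφ : φ < 1) :
    IntegrableOn (pden φ) (Set.Ioo (0:ℝ) (Cphi φ)) := by
  have h : IntegrableOn (fun l : ℝ => l ^ (-φ)) (Set.Ioo (0:ℝ) (Cphi φ)) :=
    integrableOn_rpow_Ioo (by linarith) (Cphi_pos hφ).le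
  have h2 : IntegrableOn (fun l : ℝ => (1 - φ) * Cphi φ ^ (φ - 1) * l ^ (-φ))
      (Set.Ioo (0:ℝ) (Cphi φ)) := h.const_mul _
  exact h2.congr_fun (fun l _ => rfl) measurableSet_Ioo

lemma integrableOn_sq_pden {φ : ℝ} (hφ : φ < 1) :
    IntegrableOn (fun l => l ^ 2 * pden φ l) (Set.Ioo (0:ℝ) (Cphi φ)) := by
  have h := integrableOn_calK_integrand hφ 0
  exact h.congr_fun (fun l _ => by simp) measurableSet_Ioo

lemma calK_nonneg {φ : ℝ} (hφ : φ < 1) (x : ℝ) : 0 ≤ calK φ x := by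
  apply setIntegral_nonneg measurableSet_Ioo
  intro l hl
  exact le_of_lt (mul_pos (mul_pos (pow_pos hl.1 2) (Real.exp_pos _)) (pden_pos hφ hl.1))

lemma calK_pos {φ : ℝ} (hφ : φ < 1) (x : ℝ) : 0 < calK φ x := by
  have hC := Cphi_pos hφ
  have heq : calK φ x = ∫ l in (0:ℝ)..(Cphi φ), l ^ 2 * Real.exp (-2 * l * x) * pden φ l := by
    rw [calK, intervalIntegral.integral_of_le hC.le, integral_Ioc_eq_integral_Ioo]
  rw [heq]
  apply intervalIntegral.intervalIntegral_pos_of_pos_on _ _ hC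
  · rw [intervalIntegrable_iff_integrableOn_Ioc_of_le hC.le]
    exact (integrableOn_calK_integrand hφ x).congr_set_ae Ioo_ae_eq_Ioc.symm
  · intro l hl
    exact mul_pos (mul_pos (pow_pos hl.1 2) (Real.exp_pos _)) (pden_pos hφ hl.1)

lemma calK_antitone {φ : ℝ} (hφ : φ < 1) : Antitone (calK φ) := by
  intro u v huv
  apply setIntegral_mono_on (integrableOn_calK_integrand hφ v)
    (integrableOn_calK_integrand hφ u) measurableSet_Ioo
  intro l hl
  have hl0 : 0 < l := hl.1
  have : Real.exp (-2 * l * v) ≤ Real.exp (-2 * l * u) :=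
    Real.exp_le_exp.2 (by nlinarith)
  apply mul_le_mul_of_nonneg_right _ (le_of_lt (pden_pos hφ hl0))
  exact mul_le_mul_of_nonneg_left this (by positivity)

lemma calK_le_M {φ : ℝ} (hφ : φ < 1) {x : ℝ} (hx : 0 ≤ x) :
    calK φ x ≤ ∫ l in Set.Ioo (0:ℝ) (Cphi φ), l ^ 2 * pden φ l := by
  apply setIntegral_mono_on (integrableOn_calK_integrand hφ x)
    (integrableOn_sq_pden hφ) measurableSet_Ioo
  intro l hl
  have hl0 : 0 < l := hl.1
  have : Real.exp (-2 * l * x) ≤ 1 := Real.exp_le_one_iff.2 (by nlinarith)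
  calc l ^ 2 * Real.exp (-2 * l * x) * pden φ l
      ≤ l ^ 2 * 1 * pden φ l := by
        apply mul_le_mul_of_nonneg_right _ (le_of_lt (pden_pos hφ hl0))
        exact mul_le_mul_of_nonneg_left this (by positivity)
    _ = l ^ 2 * pden φ l := by ring

/-- `exp t ≥ t² / 4` for `t ≥ 0`. -/
lemma sq_div_four_le_exp {t : ℝ} (ht : 0 ≤ t) : t ^ 2 / 4 ≤ Real.exp t := by
  have h1 : t / 2 + 1 ≤ Real.exp (t / 2) := Real.add_one_le_exp _
  have h2 : Real.exp t = Real.exp (t / 2) * Real.exp (t / 2) := by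
    rw [← Real.exp_add]; ring_nf
  nlinarith [Real.exp_pos (t / 2)]

/-- Decay bound:  `calK φ u ≤ P / u²` for `u > 0`. -/
lemma calK_le_decay {φ : ℝ} (hφ : φ < 1) {u : ℝ} (hu : 0 < u) :
    calK φ u ≤ (∫ l in Set.Ioo (0:ℝ) (Cphi φ), pden φ l) / u ^ 2 := by
  have hInt : IntegrableOn (fun l => pden φ l / u ^ 2)
      (Set.Ioo (0:ℝ) (Cphi φ)) := (integrableOn_pden hφ).div_const _
  have heq : (∫ l in Set.Ioo (0:ℝ) (Cphi φ), pden φ l) / u ^ 2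
      = ∫ l in Set.Ioo (0:ℝ) (Cphi φ), pden φ l / u ^ 2 := (integral_div _ _).symm
  rw [heq]
  apply setIntegral_mono_on (integrableOn_calK_integrand hφ u) hInt measurableSet_Ioo
  intro l hl
  have hl0 : 0 < l := hl.1
  have hkey : l ^ 2 * Real.exp (-2 * l * u) ≤ 1 / u ^ 2 := by
    have ht : 0 ≤ 2 * l * u := by positivity
    have h1 : (2 * l * u) ^ 2 / 4 ≤ Real.exp (2 * l * u) := sq_div_four_le_exp ht
    have h2 : Real.exp (-2 * l * u) = (Real.exp (2 * l * u))⁻¹ := by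
      rw [← Real.exp_neg]; ring_nf
    rw [h2]
    have h3 : (Real.exp (2 * l * u))⁻¹ ≤ ((2 * l * u) ^ 2 / 4)⁻¹ := by
      apply inv_anti₀ _ h1
      positivity
    calc l ^ 2 * (Real.exp (2 * l * u))⁻¹ ≤ l ^ 2 * ((2 * l * u) ^ 2 / 4)⁻¹ := by
          exact mul_le_mul_of_nonneg_left h3 (by positivity)
      _ = 1 / u ^ 2 := by field_simp; ring
  calc l ^ 2 * Real.exp (-2 * l * u) * pden φ l
      ≤ 1 / u ^ 2 * pden φ l :=
        mul_le_mul_of_nonneg_right hkey (le_of_lt (pden_pos hφ hl0))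
    _ = pden φ l / u ^ 2 := by ring

lemma calK_measurable {φ : ℝ} (hφ : φ < 1) : Measurable (calK φ) :=
  (calK_antitone hφ).measurable

/-- Interval integrability of `u ^ β * calK φ u` on `[0, V]`. -/
lemma intervalIntegrable_main {φ β : ℝ} (hφ : φ < 1) (hβ : 0 ≤ β) {V : ℝ} (hV : 0 ≤ V) :
    IntervalIntegrable (fun u => u ^ β * calK φ u) volume 0 V := by
  set M : ℝ := ∫ l in Set.Ioo (0:ℝ) (Cphi φ), l ^ 2 * pden φ l with hM
  rw [intervalIntegrable_iff_integrableOn_Ioc_of_le hV]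
  apply Integrable.mono' (g := fun u => M * u ^ β)
  · have h : IntervalIntegrable (fun u : ℝ => u ^ β) volume 0 V :=
      intervalIntegral.intervalIntegrable_rpow' (by linarith)
    exact (((intervalIntegrable_iff_integrableOn_Ioc_of_le hV).mp h).const_mul M)
  · apply Measurable.aestronglyMeasurable
    exact (by measurability : Measurable fun u : ℝ => u ^ β).mul (calK_measurable hφ)
  · rw [ae_restrict_iff' measurableSet_Ioc]
    filter_upwards with u hu
    have hu0 : 0 < u := hu.1
    have h1 : 0 ≤ u ^ β * calK φ u :=
      mul_nonneg (rpow_nonneg hu0.le _) (calK_nonneg hφ u)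
    rw [Real.norm_eq_abs, abs_of_nonneg h1]
    calc u ^ β * calK φ u ≤ u ^ β * M :=
          mul_le_mul_of_nonneg_left (calK_le_M hφ hu0.le) (rpow_nonneg hu0.le _)
      _ = M * u ^ β := by ring

/-- For `φ < 1` and `α ≥ 0`, `∫₀^V u^{α/(α+1)} 𝒦(u) du` is of constant order,
uniformly over `V ≥ 1`. -/
theorem kernel_integral_constant_order (φ α : ℝ) (hφ : φ < 1) (hα : 0 ≤ α) :
    ∃ c₁ c₂ : ℝ, 0 < c₁ ∧ c₁ ≤ c₂ ∧
      ∀ V : ℝ, 1 ≤ V →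
        c₁ ≤ (∫ u in (0:ℝ)..V, u ^ (α / (α + 1)) * calK φ u) ∧
        (∫ u in (0:ℝ)..V, u ^ (α / (α + 1)) * calK φ u) ≤ c₂ := by
  set β : ℝ := α / (α + 1) with hβdef
  have hβ0 : 0 ≤ β := div_nonneg hα (by linarith)
  have hβ1 : β < 1 := (div_lt_one (by linarith)).2 (by linarith)
  set P : ℝ := ∫ l in Set.Ioo (0:ℝ) (Cphi φ), pden φ l with hP
  have hP0 : 0 ≤ P :=
    setIntegral_nonneg measurableSet_Ioo (fun l hl => le_of_lt (pden_pos hφ hl.1))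
  set F1 : ℝ := ∫ u in (0:ℝ)..1, u ^ β * calK φ u with hF1
  have hF1pos : 0 < F1 := by
    apply intervalIntegral.intervalIntegral_pos_of_pos_on
      (intervalIntegrable_main hφ hβ0 zero_le_one) _ one_pos
    intro u hu
    exact mul_pos (rpow_pos_of_pos hu.1 _) (calK_pos hφ u)
  refine ⟨F1, F1 + P / (1 - β), hF1pos, le_add_of_nonneg_right
    (div_nonneg hP0 (by linarith)), ?_⟩
  intro V hV
  have hV0 : (0:ℝ) ≤ V := by linarith
  have hI01 : IntervalIntegrable (fun u => u ^ β * calK φ u) volume 0 1 :=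
    intervalIntegrable_main hφ hβ0 zero_le_one
  have hI1V : IntervalIntegrable (fun u => u ^ β * calK φ u) volume 1 V := by
    apply (intervalIntegrable_main hφ hβ0 hV0).mono_set
    rw [Set.uIcc_of_le hV, Set.uIcc_of_le hV0]
    exact Set.Icc_subset_Icc (by norm_num) le_rfl
  have hsplit : (∫ u in (0:ℝ)..V, u ^ β * calK φ u)
      = F1 + ∫ u in (1:ℝ)..V, u ^ β * calK φ u :=
    (intervalIntegral.integral_add_adjacent_intervals hI01 hI1V).symm
  constructor
  · rw [hsplit]
    apply le_add_of_nonneg_right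
    apply intervalIntegral.integral_nonneg hV
    intro u hu
    exact mul_nonneg (rpow_nonneg (by linarith [hu.1]) _) (calK_nonneg hφ u)
  · rw [hsplit]
    apply add_le_add_right
    have hIg : IntervalIntegrable (fun u : ℝ => P * u ^ (β - 2)) volume 1 V := by
      apply ContinuousOn.intervalIntegrable
      apply continuousOn_const.mul
      apply continuousOn_id.rpow_const
      intro x hx
      rw [Set.uIcc_of_le hV] at hx
      exact Or.inl (by simp only [id_eq]; linarith [hx.1])
    have hmono : (∫ u in (1:ℝ)..V, u ^ β * calK φ u)
        ≤ ∫ u in (1:ℝ)..V, P * u ^ (β - 2) := by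
      apply intervalIntegral.integral_mono_on hV hI1V hIg
      intro u hu
      have hu0 : (0:ℝ) < u := by linarith [hu.1]
      have hstep : calK φ u ≤ P / u ^ 2 := calK_le_decay hφ hu0
      have hrw : u ^ β * (P / u ^ 2) = P * u ^ (β - 2) := by
        rw [Real.rpow_sub hu0, show u ^ ((2:ℝ)) = u ^ 2 by
          rw [show ((2:ℝ)) = ((2:ℕ):ℝ) by norm_num, Real.rpow_natCast]]
        ring
      calc u ^ β * calK φ u ≤ u ^ β * (P / u ^ 2) :=
            mul_le_mul_of_nonneg_left hstep (rpow_nonneg hu0.le _)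
        _ = P * u ^ (β - 2) := hrw
    have hval : (∫ u in (1:ℝ)..V, P * u ^ (β - 2))
        = P * ((V ^ (β - 1) - 1) / (β - 1)) := by
      rw [intervalIntegral.integral_const_mul, integral_rpow (Or.inr
        ⟨by intro h; linarith [sub_eq_iff_eq_add.mp h],
         by rw [Set.uIcc_of_le hV]; intro h; exact absurd h.1 (by norm_num)⟩)]
      rw [show β - 2 + 1 = β - 1 by ring, Real.one_rpow]
    have hfrac : (V ^ (β - 1) - 1) / (β - 1) ≤ 1 / (1 - β) := by
      set t : ℝ := V ^ (β - 1) with htdef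
      have ht1 : t ≤ 1 := rpow_le_one_of_one_le_of_nonpos hV (by linarith)
      have ht0 : 0 ≤ t := rpow_nonneg (by linarith) _
      have hrw2 : (t - 1) / (β - 1) = (1 - t) / (1 - β) := by
        rw [show t - 1 = -(1 - t) by ring, show β - 1 = -(1 - β) by ring, neg_div_neg_eq]
      rw [hrw2]
      gcongr
      · linarith
    calc (∫ u in (1:ℝ)..V, u ^ β * calK φ u)
        ≤ P * ((V ^ (β - 1) - 1) / (β - 1)) := hmono.trans (le_of_eq hval)
      _ ≤ P * (1 / (1 - β)) := mul_le_mul_of_nonneg_left hfrac hP0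
      _ = P / (1 - β) := by ring
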